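/- Let C be a weakly connected component of the subgraph of up-arcs (or down-arcs) of a rooted oriented tree, with root r_C the vertex of C closest to the global root r, and let C̊ be its core. If ℓ is a link with cov⃗(ℓ) ∩ A(C̊) ≠ ∅ and cov⃖(ℓ) ∩ A(C̊) ≠ ∅, then ℓ is neither an up-link nor a down-link, i.e., apex(ℓ) is an inner vertex of P_ℓ. -/

import Mathlib

open scoped Classical

/-- A tree on vertex set `V`, rooted at `root`, encoded via the parent function.
Every non-root vertex `z` corresponds to the unique tree edge/arc `a_z` between
`z` and `parent z`. -/
structure ArcTree (V : Type*) where
  root : V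
  parent : V → V
  parent_root : parent root = root
  reaches_root : ∀ v : V, ∃ n : ℕ, parent^[n] v = root

namespace ArcTree

variable {V : Type*}

/-- `x` is an ancestor of `y` (possibly `x = y`). -/
def anc (T : ArcTree V) (x y : V) : Prop := ∃ n : ℕ, T.parent^[n] y = x

/-- The arc `a_z` (between `z` and `parent z`, for `z ≠ root`) lies on the
tree path between `u` and `v`. -/
def arcOnPath (T : ArcTree V) (u v z : V) : Prop :=
  z ≠ T.root ∧ ¬ (T.anc z u ↔ T.anc z v)

/-- The vertex `x` lies on the tree path between `u` and `v`. -/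
def onPath (T : ArcTree V) (u v x : V) : Prop :=
  (T.anc x u ∨ T.anc x v) ∧ ∀ z, T.anc z u → T.anc z v → T.anc z x

/-- `x` is an inner vertex of the tree path between `u` and `v`. -/
def innerOnPath (T : ArcTree V) (u v x : V) : Prop :=
  T.onPath u v x ∧ x ≠ u ∧ x ≠ v

/-- `w` is the least common ancestor of `u` and `v`. -/
def isLca (T : ArcTree V) (u v w : V) : Prop :=
  T.anc w u ∧ T.anc w v ∧ ∀ z, T.anc z u → T.anc z v → T.anc z w

end ArcTree

section Cover

variable {V : Type*}

/- Orientation convention: `up z = true` means the arc `a_z` is directed from `z` to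
`parent z` (an up-arc, pointing towards the root); `up z = false` means it is directed
from `parent z` to `z` (a down-arc). -/

/-- The directed link `ℓ = (u, v)` covers the arc `a_z`, i.e. `a_z` is a backward arc
of the tree path from `u` to `v` (equivalently, the walk from `v` back to `u`
traverses `a_z` in its forward direction). -/
def covers (T : ArcTree V) (up : V → Bool) (ℓ : V × V) (z : V) : Prop :=
  z ≠ T.root ∧
    ((T.anc z ℓ.2 ∧ ¬ T.anc z ℓ.1 ∧ up z = true) ∨
     (T.anc z ℓ.1 ∧ ¬ T.anc z ℓ.2 ∧ up z = false))

/-- The link `ℓ = (u,v)` covers the arc `a_z` in the wrong direction, i.e. `a_z` is a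
forward arc of the tree path from `u` to `v`. -/
def wcovers (T : ArcTree V) (up : V → Bool) (ℓ : V × V) (z : V) : Prop :=
  z ≠ T.root ∧
    ((T.anc z ℓ.1 ∧ ¬ T.anc z ℓ.2 ∧ up z = true) ∨
     (T.anc z ℓ.2 ∧ ¬ T.anc z ℓ.1 ∧ up z = false))

/-- `ℓ'` is a shadow of `ℓ`: the endpoints of `ℓ'` lie, in this order, on the tree path
of `ℓ`. -/
def IsShadow (T : ArcTree V) (ℓ ℓ' : V × V) : Prop :=
  T.onPath ℓ.1 ℓ.2 ℓ'.1 ∧ T.onPath ℓ'.1 ℓ.2 ℓ'.2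

/-- `x` is an inner vertex of the path of the generic shadow of `ℓ` (the minimal shadow
with the same directed coverage): `x` lies on `P_ℓ` and `ℓ` covers arcs on both sides
of `x`. -/
def innerGeneric (T : ArcTree V) (up : V → Bool) (ℓ : V × V) (x : V) : Prop :=
  T.onPath ℓ.1 ℓ.2 x ∧
    (∃ z, covers T up ℓ z ∧ T.arcOnPath ℓ.1 x z) ∧
    (∃ z, covers T up ℓ z ∧ T.arcOnPath x ℓ.2 z)

/-- The arc `a_z` (lying in the subtree of `v`) is visible to `v` with respect to the
link set `L'`. -/
def visibleArc (T : ArcTree V) (up : V → Bool) (L' : Set (V × V)) (v z : V) : Prop :=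
  T.anc v z ∧ z ≠ v ∧ ∃ ℓ ∈ L', covers T up ℓ z ∧ innerGeneric T up ℓ v

/-- A set of arcs (encoded by their lower endpoints) is ancestor-free: no arc of the
set lies on the path from another arc's apex (top endpoint) to the root. -/
def AncestorFree (T : ArcTree V) (S : Set V) : Prop :=
  ∀ z ∈ S, ∀ z' ∈ S, z ≠ z' → ¬ T.anc z' (T.parent z)

/-- The visible up-width of `v` w.r.t. the link set `L'` is at most `k`. -/
def upWidthLE (T : ArcTree V) (up : V → Bool) (L' : Set (V × V)) (v : V) (k : ℕ) : Prop :=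
  ∀ S : Finset V, AncestorFree T (S : Set V) →
    (∀ z ∈ S, up z = true ∧ visibleArc T up L' v z) → S.card ≤ k

/-- The visible down-width of `v` w.r.t. the link set `L'` is at most `k`. -/
def downWidthLE (T : ArcTree V) (up : V → Bool) (L' : Set (V × V)) (v : V) (k : ℕ) : Prop :=
  ∀ S : Finset V, AncestorFree T (S : Set V) →
    (∀ z ∈ S, up z = false ∧ visibleArc T up L' v z) → S.card ≤ k

/-- The link `ℓ` points into the subtree `T_v`. -/
def pointsInto (T : ArcTree V) (v : V) (ℓ : V × V) : Prop :=
  T.anc v ℓ.2 ∧ ℓ.2 ≠ v ∧ ¬ T.anc v ℓ.1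

/-- The link `ℓ` points out of the subtree `T_v`. -/
def pointsOut (T : ArcTree V) (v : V) (ℓ : V × V) : Prop :=
  T.anc v ℓ.1 ∧ ℓ.1 ≠ v ∧ ¬ T.anc v ℓ.2

/-- `v` is up-independent w.r.t. the link set `L'`: every link either covers no up-arc
of the subtree `T_v`, or its whole coverage lies inside `T_v`. -/
def upIndep (T : ArcTree V) (up : V → Bool) (L' : Set (V × V)) (v : V) : Prop :=
  ∀ ℓ ∈ L', (¬ ∃ z, covers T up ℓ z ∧ T.anc v z ∧ z ≠ v ∧ up z = true) ∨
    (∀ z, covers T up ℓ z → T.anc v z ∧ z ≠ v)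

/-- `v` is down-independent w.r.t. the link set `L'`. -/
def downIndep (T : ArcTree V) (up : V → Bool) (L' : Set (V × V)) (v : V) : Prop :=
  ∀ ℓ ∈ L', (¬ ∃ z, covers T up ℓ z ∧ T.anc v z ∧ z ≠ v ∧ up z = false) ∨
    (∀ z, covers T up ℓ z → T.anc v z ∧ z ≠ v)

/-- A feasible (integral) solution: every arc is covered by some link of `F`. -/
def Feasible (T : ArcTree V) (up : V → Bool) (F : Finset (V × V)) : Prop :=
  ∀ z, z ≠ T.root → ∃ ℓ ∈ F, covers T up ℓ z

/-- `F` is shadow-minimal: no link of `F` can be replaced by a proper shadow while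
maintaining feasibility. -/
def ShadowMinimal (T : ArcTree V) (up : V → Bool) (F : Finset (V × V)) : Prop :=
  ∀ ℓ ∈ F, ∀ ℓ' : V × V, IsShadow T ℓ ℓ' → ℓ' ≠ ℓ →
    ¬ Feasible T up (insert ℓ' (F.erase ℓ))

/-- A splitting of the link set: each link is mapped to a set of shadows whose tree
paths partition the arc set of its tree path. -/
def IsSplitting (T : ArcTree V) (σ : V × V → Finset (V × V)) : Prop :=
  ∀ ℓ : V × V,
    (σ ℓ).Nonempty ∧
    (∀ ℓ' ∈ σ ℓ, IsShadow T ℓ ℓ' ∧ (ℓ'.1 ≠ ℓ'.2 ∨ ℓ' = ℓ)) ∧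
    (∀ z, T.arcOnPath ℓ.1 ℓ.2 z ↔ ∃ ℓ' ∈ σ ℓ, T.arcOnPath ℓ'.1 ℓ'.2 z) ∧
    (∀ ℓ₁ ∈ σ ℓ, ∀ ℓ₂ ∈ σ ℓ, ℓ₁ ≠ ℓ₂ →
      ∀ z, T.arcOnPath ℓ₁.1 ℓ₁.2 z → ¬ T.arcOnPath ℓ₂.1 ℓ₂.2 z)

/-- The LP solution obtained from `x` by applying the splitting `σ`. -/
noncomputable def splitSol [Fintype V] (σ : V × V → Finset (V × V)) (x : V × V → ℝ) :
    V × V → ℝ :=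
  fun ℓ' => ∑ ℓ : V × V, if ℓ' ∈ σ ℓ then x ℓ else 0

/-- `x` is a feasible solution of the WDTAP set-covering LP. -/
def FeasLP [Fintype V] (T : ArcTree V) (up : V → Bool) (x : V × V → ℝ) : Prop :=
  (∀ ℓ, 0 ≤ x ℓ) ∧
    ∀ z, z ≠ T.root → 1 ≤ ∑ ℓ : V × V, if covers T up ℓ z then x ℓ else 0

end Cover

/-!
When one endpoint of `ℓ` is an ancestor of the other, `P_ℓ` is a vertical path traversed by
`ℓ` in a single direction, so the arcs `ℓ` covers all have one orientation and the arcs it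
covers in the wrong direction all have the other. The arcs of the core share a single
orientation, so they cannot be covered by such a link in both directions.
-/

section

variable {V : Type*}

theorem ArcTree.anc.trans {T : ArcTree V} {x y w : V} (hxy : T.anc x y) (hyw : T.anc y w) :
    T.anc x w := by
  obtain ⟨n, hn⟩ := hxy
  obtain ⟨m, hm⟩ := hyw
  exact ⟨n + m, by rw [Function.iterate_add_apply, hm, hn]⟩

theorem wcovers_iff_covers_swap (T : ArcTree V) (up : V → Bool) (ℓ : V × V) (z : V) :
    wcovers T up ℓ z ↔ covers T up ℓ.swap z :=
  Iff.rfl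

theorem up_eq_false_of_covers_of_anc {T : ArcTree V} {up : V → Bool} {ℓ : V × V} {z : V}
    (hlink : T.anc ℓ.2 ℓ.1) (hz : covers T up ℓ z) : up z = false := by
  rcases hz.2 with ⟨hz₂, hz₁, -⟩ | ⟨-, -, hup⟩
  · exact absurd (hz₂.trans hlink) hz₁
  · exact hup

theorem up_eq_true_of_covers_of_anc {T : ArcTree V} {up : V → Bool} {ℓ : V × V} {z : V}
    (hlink : T.anc ℓ.1 ℓ.2) (hz : covers T up ℓ z) : up z = true := by
  rcases hz.2 with ⟨-, -, hup⟩ | ⟨hz₁, hz₂, -⟩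
  · exact hup
  · exact absurd (hz₁.trans hlink) hz₂

theorem up_ne_of_covers_of_wcovers {T : ArcTree V} {up : V → Bool} {ℓ : V × V} {z z' : V}
    (hlink : T.anc ℓ.2 ℓ.1 ∨ T.anc ℓ.1 ℓ.2) (hz : covers T up ℓ z) (hz' : wcovers T up ℓ z') :
    up z ≠ up z' := by
  rw [wcovers_iff_covers_swap] at hz'
  rcases hlink with hlink | hlink
  · rw [up_eq_false_of_covers_of_anc hlink hz, up_eq_true_of_covers_of_anc hlink hz']
    decide
  · rw [up_eq_true_of_covers_of_anc hlink hz, up_eq_false_of_covers_of_anc hlink hz']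
    decide

end

theorem core_covered_both_directions_not_up_or_down_link_general {V : Type*}
    (T : ArcTree V) (up : V → Bool) (S : Set V)
    (horient : (∀ z ∈ S, up z = true) ∨ (∀ z ∈ S, up z = false)) :
    ∀ ℓ : V × V, (∃ z ∈ S, covers T up ℓ z) → (∃ z ∈ S, wcovers T up ℓ z) →
      ¬ T.anc ℓ.2 ℓ.1 ∧ ¬ T.anc ℓ.1 ℓ.2 := by
  rintro ℓ ⟨z, hzS, hz⟩ ⟨z', hz'S, hz'⟩
  have hsame : up z = up z' := by
    rcases horient with h | h <;> rw [h z hzS, h z' hz'S]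
  exact not_or.mp fun hlink => up_ne_of_covers_of_wcovers hlink hz hz' hsame

/-- Let `S` be the arc set of the core `C̊` of a component of the
up-arc (or down-arc) subgraph with root `r_C`: all arcs of `S` have the same orientation
type, and `S` is a union of paths leading up to `r_C` (if the arc `a_z ∈ S` then every
arc on the path from `z` to `r_C` is in `S`). If a link `ℓ` covers some arc of `S` in
the right direction and some arc of `S` in the wrong direction, then `ℓ` is neither an
up-link nor a down-link, i.e. its apex is an inner vertex of `P_ℓ`. -/
theorem core_covered_both_directions_not_up_or_down_link {V : Type*}
    (T : ArcTree V) (up : V → Bool) (S : Set V) (rC : V)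
    (hS : ∀ z ∈ S, z ≠ T.root)
    (horient : (∀ z ∈ S, up z = true) ∨ (∀ z ∈ S, up z = false))
    (hcore : ∀ z ∈ S, T.anc rC z ∧
      ∀ w, T.anc w z → T.anc rC w → w ≠ rC → w ∈ S) :
    ∀ ℓ : V × V, (∃ z ∈ S, covers T up ℓ z) → (∃ z ∈ S, wcovers T up ℓ z) →
      ¬ T.anc ℓ.2 ℓ.1 ∧ ¬ T.anc ℓ.1 ℓ.2 :=
  core_covered_both_directions_not_up_or_down_link_general T up S horient
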